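/- arXiv:1805.07141 — 6 statements merged into one kernel-verified Lean document; each statement's English description precedes it below -/
import Mathlib

section
/- Let G be a simple graph with independence number at most d, let S be a set of vertices of G, and let W be an S-forest of G. Then |S ∩ W| ≤ 2d. -/
/-!
Every cycle of `G[S ∩ W]` is a cycle of `G[W]` through a vertex of `S`, so `G[S ∩ W]` is a
forest. A forest is bipartite, and the larger of its two colour classes is an independent set of
`G` containing at least half of `S ∩ W`.
-/

/-- `W` is an `S`-forest of `G`: no cycle of the induced subgraph `G[W]`
contains a vertex of `S`. -/
def SForest {V : Type*} (G : SimpleGraph V) (S W : Set V) : Prop :=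
  ∀ (u : W) (c : (G.induce W).Walk u u), c.IsCycle → ∀ v ∈ c.support, (v : V) ∉ S

open Finset

namespace SimpleGraph

variable {V : Type*} {G : SimpleGraph V}

theorem Colorable.card_le_mul_indepNum [Finite V] {n : ℕ} (hG : G.Colorable n) :
    Nat.card V ≤ n * G.indepNum := by
  have := Fintype.ofFinite V
  classical
  obtain ⟨C⟩ := hG
  calc Nat.card V = ∑ c : Fin n, #{v | C v = c} := by
        rw [Nat.card_eq_fintype_card, ← card_univ,
          card_eq_sum_card_fiberwise (f := C) (t := univ) fun _ _ => mem_univ _]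
    _ ≤ ∑ _c : Fin n, G.indepNum := by
        refine sum_le_sum fun c _ => IsIndepSet.card_le_indepNum ?_
        simpa [Coloring.colorClass] using C.isIndepSet_colorClass c
    _ = n * G.indepNum := by simp

theorem indepNum_induce_le [Finite V] (U : Set V) : (G.induce U).indepNum ≤ G.indepNum := by
  classical
  obtain ⟨s, hs⟩ := (G.induce U).exists_isNIndepSet_indepNum
  rw [← hs.card_eq, ← card_map (Function.Embedding.subtype _)]
  refine IsIndepSet.card_le_indepNum ?_
  rw [coe_map]
  rintro _ ⟨x, hx, rfl⟩ _ ⟨y, hy, rfl⟩ hxy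
  exact hs.isIndepSet hx hy (ne_of_apply_ne _ hxy)

end SimpleGraph

open SimpleGraph

theorem SForest.isAcyclic_induce_inter {V : Type*} {G : SimpleGraph V} {S W : Set V}
    (hW : SForest G S W) : (G.induce (S ∩ W)).IsAcyclic := by
  intro u c hc
  let f := induceHomOfLE G (Set.inter_subset_right (s := S) (t := W))
  exact hW _ (c.map f.toHom) (hc.map f.injective) _ (c.map f.toHom).start_mem_support u.2.1

/-- If every independent set of `G` has at most `d` vertices and `W` is an
`S`-forest of `G`, then `|S ∩ W| ≤ 2d`. -/
theorem stmt1 {V : Type*} [Fintype V] (G : SimpleGraph V) (d : ℕ)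
    (hα : ∀ I : Set V, I.Pairwise (fun u v => ¬ G.Adj u v) → I.ncard ≤ d)
    (S W : Set V) (hW : SForest G S W) :
    (S ∩ W).ncard ≤ 2 * d := by
  have hd : G.indepNum ≤ d := by
    obtain ⟨s, hs⟩ := G.exists_isNIndepSet_indepNum
    simpa [← hs.card_eq] using hα s hs.isIndepSet
  calc (S ∩ W).ncard = Nat.card (S ∩ W : Set V) := (Nat.card_coe_set_eq _).symm
    _ ≤ 2 * (G.induce (S ∩ W)).indepNum :=
        hW.isAcyclic_induce_inter.colorable_two.card_le_mul_indepNum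
    _ ≤ 2 * d := by grw [indepNum_induce_le, hd]
end

section
/- Let G be a simple graph with independence number at most d, let S be a set of vertices of G, and let W be an S-forest of G with 1 ≤ |S ∩ W| ≤ 2d − 2. Let S_{≤1} be the set of vertices of W that belong to S ∩ W or have a G-neighbor in S ∩ W. Then |S_{≤1}| ≤ 4d − 2. -/
/-- The set `S_{≤1}` of vertices of `W` that belong to `S ∩ W` or have a `G`-neighbor
in `S ∩ W`. -/
def sle1 {V : Type*} (G : SimpleGraph V) (S W : Set V) : Set V :=
  {v | v ∈ W ∧ (v ∈ S ∩ W ∨ ∃ u ∈ S ∩ W, G.Adj v u)}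

namespace SimpleGraph

variable {α : Type*} {H : SimpleGraph α}

theorem dist_lt_of_mem_support_of_length_eq_dist {r a y : α} {p : H.Walk r a}
    (hp : p.length = H.dist r a) (hy : y ∈ p.support) (hya : y ≠ a) :
    H.dist r y < H.dist r a := by
  classical
  exact hp ▸ (dist_le _).trans_lt (p.length_takeUntil_lt_length hy hya)

theorem not_isBridge_of_adj_of_dist_le {r y a b : α} (hr : H.Reachable r y)
    (ha : H.Adj y a) (hb : H.Adj y b) (hab : a ≠ b)
    (hda : H.dist r a ≤ H.dist r y) (hdb : H.dist r b ≤ H.dist r y) :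
    ¬ H.IsBridge s(y, a) := by
  have shortest_avoids : ∀ {c}, H.Adj y c → H.dist r c ≤ H.dist r y →
      ∃ p : H.Walk r c, y ∉ p.support := by
    intro c hc hdc
    obtain ⟨p, hp⟩ := (hr.trans hc.reachable).exists_walk_length_eq_dist
    exact ⟨p, fun hy => (dist_lt_of_mem_support_of_length_eq_dist hp hy hc.ne).not_ge hdc⟩
  obtain ⟨pa, hpa⟩ := shortest_avoids ha hda
  obtain ⟨pb, hpb⟩ := shortest_avoids hb hdb
  rw [isBridge_iff_forall_walk_mem_edges, not_forall]
  refine ⟨Walk.cons hb (pb.reverse.append pa), ?_⟩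
  simp only [Walk.edges_cons, Walk.edges_append, Walk.edges_reverse, List.mem_cons,
    List.mem_append, List.mem_reverse, not_or]
  refine ⟨fun h => hab (Sym2.congr_right.mp h), fun h => hpb ?_, fun h => hpa ?_⟩
  · exact pb.fst_mem_support_of_mem_edges h
  · exact pa.fst_mem_support_of_mem_edges h

noncomputable def depth (H : SimpleGraph α) (v : α) : ℕ :=
  H.dist (H.connectedComponentMk v).out v

theorem not_isBridge_of_adj_of_depth_le {y a b : α} (ha : H.Adj y a) (hb : H.Adj y b)
    (hab : a ≠ b) (hda : H.depth a ≤ H.depth y) (hdb : H.depth b ≤ H.depth y) :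
    ¬ H.IsBridge s(y, a) := by
  have root_eq : ∀ {c}, H.Adj y c →
      (H.connectedComponentMk c).out = (H.connectedComponentMk y).out := fun hc => by
    rw [ConnectedComponent.connectedComponentMk_eq_of_adj hc.symm]
  unfold depth at hda hdb
  rw [root_eq ha] at hda
  rw [root_eq hb] at hdb
  exact not_isBridge_of_adj_of_dist_le (ConnectedComponent.exact (H.connectedComponentMk y).out_eq)
    ha hb hab hda hdb

theorem isBridge_of_forall_isCycle_notMem {T : Set α}
    (hT : ∀ u (c : H.Walk u u), c.IsCycle → ∀ v ∈ c.support, v ∉ T) {t x : α}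
    (ht : t ∈ T) (hx : H.Adj t x) : H.IsBridge s(t, x) :=
  (isBridge_iff_forall_cycle_notMem hx).mpr fun u c hc he =>
    hT u c hc t (c.fst_mem_support_of_mem_edges he) ht

theorem isIndepSet_of_forall_le_not_adj {β : Type*} [LinearOrder β] {s : Set α} (f : α → β)
    (h : ∀ x ∈ s, ∀ y ∈ s, f x ≤ f y → ¬ H.Adj x y) : H.IsIndepSet s := by
  intro x hx y hy _ hadj
  rcases le_total (f x) (f y) with hle | hle
  · exact h x hx y hy hle hadj
  · exact h y hy x hx hle hadj.symm

def outerBoundary (H : SimpleGraph α) (T : Set α) : Set α :=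
  {x | x ∉ T ∧ ∃ t ∈ T, H.Adj x t}

theorem exists_isIndepSet_encard_outerBoundary_le {T : Set α}
    (hT : ∀ t ∈ T, ∀ x, H.Adj t x → H.IsBridge s(t, x)) :
    ∃ A B : Set α, H.IsIndepSet A ∧ H.IsIndepSet B ∧
      (H.outerBoundary T).encard ≤ A.encard + B.encard := by
  set N := H.outerBoundary T
  set low := {x ∈ N | ∀ t ∈ T, H.Adj x t → H.depth t < H.depth x}
  have high : ∀ x ∈ N \ low, ∃ t ∈ T, H.Adj x t ∧ H.depth x ≤ H.depth t := by
    rintro x ⟨hxN, hxlow⟩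
    simpa [low, hxN] using hxlow
  choose! c hcT hcadj hcdepth using high
  have hc_inj : Set.InjOn c (N \ low) := by
    intro x hx x' hx' hcx
    by_contra hne
    exact not_isBridge_of_adj_of_depth_le (hcadj x hx).symm (hcx ▸ (hcadj x' hx').symm) hne
      (hcdepth x hx) (hcx ▸ hcdepth x' hx') (hT _ (hcT x hx) x (hcadj x hx).symm)
  refine ⟨low, c '' (N \ low), ?_, ?_, ?_⟩
  · refine isIndepSet_of_forall_le_not_adj H.depth ?_
    rintro x ⟨hxN, -⟩ x' ⟨⟨-, t', ht', hadj'⟩, hlow'⟩ hle hadj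
    exact not_isBridge_of_adj_of_depth_le hadj' hadj.symm (ne_of_mem_of_not_mem ht' hxN.1)
      (hlow' t' ht' hadj').le hle (Sym2.eq_swap ▸ hT t' ht' x' hadj'.symm)
  · refine isIndepSet_of_forall_le_not_adj H.depth ?_
    rintro _ ⟨x, hx, rfl⟩ _ ⟨x', hx', rfl⟩ hle hadj
    exact not_isBridge_of_adj_of_depth_le (hcadj x' hx').symm hadj.symm
      (ne_of_mem_of_not_mem (hcT x hx) hx'.1.1).symm (hcdepth x' hx') hle
      (hT _ (hcT x' hx') x' (hcadj x' hx').symm)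
  · calc N.encard = (low ∪ N \ low).encard := by
          rw [Set.union_sdiff_cancel (Set.sep_subset _ _)]
      _ ≤ low.encard + (N \ low).encard := Set.encard_union_le _ _
      _ = low.encard + (c '' (N \ low)).encard := by rw [hc_inj.encard_image]

theorem IsIndepSet.image_val_of_induce {V : Type*} {G : SimpleGraph V} {W : Set V} {I : Set W}
    (hI : (G.induce W).IsIndepSet I) : G.IsIndepSet (Subtype.val '' I) := by
  rintro _ ⟨x, hx, rfl⟩ _ ⟨y, hy, rfl⟩ hne hadj
  exact hI hx hy (fun h => hne (congrArg Subtype.val h)) hadj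

end SimpleGraph

/-- If every independent set of `G` has at most `d` vertices, `W` is an
`S`-forest of `G` with `1 ≤ |S ∩ W| ≤ 2d - 2`, then `|S_{≤1}| ≤ 4d - 2`. -/
theorem stmt2 {V : Type*} [Fintype V] (G : SimpleGraph V) (d : ℕ)
    (hα : ∀ I : Set V, I.Pairwise (fun u v => ¬ G.Adj u v) → I.ncard ≤ d)
    (S W : Set V) (hW : SForest G S W)
    (h1 : 1 ≤ (S ∩ W).ncard) (h2 : (S ∩ W).ncard ≤ 2 * d - 2) :
    (sle1 G S W).ncard ≤ 4 * d - 2 := by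
  obtain ⟨A, B, hA, hB, hN⟩ := SimpleGraph.exists_isIndepSet_encard_outerBoundary_le
    (H := G.induce W) (T := {v : W | (v : V) ∈ S})
    fun _ ht _ hadj => SimpleGraph.isBridge_of_forall_isCycle_notMem hW ht hadj
  set N := (G.induce W).outerBoundary {v : W | (v : V) ∈ S}
  have indep_le : ∀ I : Set W, (G.induce W).IsIndepSet I → I.encard ≤ d := fun I hI => by
    rw [← Subtype.val_injective.encard_image]
    exact Set.encard_le_coe_iff_finite_ncard_le.mpr
      ⟨Set.toFinite _, hα _ hI.image_val_of_induce⟩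
  have hN_le : N.ncard ≤ 2 * d := by
    refine (Set.encard_le_coe_iff_finite_ncard_le.mp ?_).2
    calc N.encard ≤ A.encard + B.encard := hN
      _ ≤ d + d := add_le_add (indep_le A hA) (indep_le B hB)
      _ = ↑(2 * d) := by push_cast; ring
  have hsub : sle1 G S W ⊆ S ∩ W ∪ Subtype.val '' N := by
    rintro v ⟨hvW, hvSW | ⟨u, hu, hvu⟩⟩
    · exact Or.inl hvSW
    · by_cases hvS : v ∈ S
      · exact Or.inl ⟨hvS, hvW⟩
      · exact Or.inr ⟨⟨v, hvW⟩, ⟨hvS, ⟨u, hu.2⟩, hu.1, hvu⟩, rfl⟩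
  calc (sle1 G S W).ncard ≤ (S ∩ W).ncard + (Subtype.val '' N).ncard :=
        (Set.ncard_le_ncard hsub).trans (Set.ncard_union_le _ _)
    _ ≤ 4 * d - 2 := by rw [Set.ncard_image_of_injective _ Subtype.val_injective]; omega
end

section
/- Let G be a simple graph with independence number at most d, let S be a set of vertices of G, and let W be an S-forest of G with |S ∩ W| ≥ 2d − 1. Let S_{≤1} be the set of vertices of W that belong to S ∩ W or have a G-neighbor in S ∩ W. Then |S_{≤1}| ≤ 2d. -/
/-! If `|S_{≤1}| > 2d`, pick `B ⊆ S_{≤1}` with `2d + 1` vertices, all but at most two of them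
in `S ∩ W`. A cycle of `G[B]` has at least three vertices, so it meets `S`, which the `S`-forest
property forbids; hence `G[B]` is a forest. Forests are bipartite, so `B` contains an independent
set of more than `d` vertices. -/

namespace SimpleGraph

variable {V : Type*} {G : SimpleGraph V}

lemma Colorable.exists_isIndepSet_card_le_two_mul_ncard [Finite V] (hG : G.Colorable 2) :
    ∃ I : Set V, G.IsIndepSet I ∧ Nat.card V ≤ 2 * I.ncard := by
  obtain ⟨C⟩ := hG
  have hcompl : (C.colorClass 0)ᶜ = C.colorClass 1 := by
    ext v
    simp only [Set.mem_compl_iff, Coloring.colorClass, Set.mem_ofPred_eq]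
    omega
  have hsplit : (C.colorClass 0).ncard + (C.colorClass 1).ncard = Nat.card V := by
    rw [← hcompl, Set.ncard_add_ncard_compl]
  rcases le_total (C.colorClass 1).ncard (C.colorClass 0).ncard with h | h
  · exact ⟨_, C.isIndepSet_colorClass 0, by omega⟩
  · exact ⟨_, C.isIndepSet_colorClass 1, by omega⟩

lemma IsIndepSet.image_val {s : Set V} {I : Set s} (hI : (G.induce s).IsIndepSet I) :
    G.IsIndepSet (Subtype.val '' I) := by
  rintro _ ⟨x, hx, rfl⟩ _ ⟨y, hy, rfl⟩ hxy
  exact hI hx hy (ne_of_apply_ne _ hxy)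

lemma exists_isIndepSet_ncard_le_two_mul_of_isAcyclic_induce {B : Set V} (hB : B.Finite)
    (h : (G.induce B).IsAcyclic) : ∃ I : Set V, G.IsIndepSet I ∧ B.ncard ≤ 2 * I.ncard := by
  have := hB.to_subtype
  obtain ⟨I, hI, hcard⟩ := h.colorable_two.exists_isIndepSet_card_le_two_mul_ncard
  refine ⟨_, hI.image_val, ?_⟩
  rw [Set.ncard_image_of_injective _ Subtype.val_injective]
  exact hcard

end SimpleGraph

open SimpleGraph

section SForest

variable {V : Type*} {G : SimpleGraph V} {S W : Set V}

lemma SForest.mono {B : Set V} (hW : SForest G S W) (hBW : B ⊆ W) : SForest G S B := by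
  intro u c hc v hv
  let f := G.induceHomOfLE hBW
  exact hW _ (c.map f.toHom) (hc.map f.injective) (f.toHom v)
    (by rw [Walk.support_map]; exact List.mem_map_of_mem hv)

lemma SForest.isAcyclic_induce (hW : SForest G S W) (h2 : (W \ S).encard ≤ 2) :
    (G.induce W).IsAcyclic := by
  classical
  intro u c hc
  let l := c.support.tail.map Subtype.val
  have hl : l.Nodup := hc.support_nodup.map Subtype.val_injective
  have hlW : (l.toFinset : Set V) ⊆ W \ S := by
    intro x hx
    obtain ⟨v, hv, rfl⟩ := List.mem_map.1 (List.mem_toFinset.1 hx)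
    exact ⟨v.2, hW u c hc v (List.mem_of_mem_tail hv)⟩
  have hlen : l.length = c.length := by
    simp only [l, List.length_map, List.length_tail, Walk.length_support]; rfl
  have hle := (Set.encard_le_encard hlW).trans h2
  rw [Set.encard_coe_eq_coe_finsetCard, List.toFinset_card_of_nodup hl, hlen] at hle
  have := hc.three_le_length
  norm_cast at hle
  omega

end SForest

theorem stmt3_general {V : Type*} (G : SimpleGraph V) (d : ℕ)
    (hα : ∀ I : Set V, I.Pairwise (fun u v => ¬ G.Adj u v) → I.ncard ≤ d)
    (S W : Set V) (hW : SForest G S W)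
    (h : 2 * d - 1 ≤ (S ∩ W).ncard) :
    (sle1 G S W).ncard ≤ 2 * d := by
  by_contra! hT
  obtain ⟨A, hAS, hA⟩ := Set.exists_subset_card_eq h
  obtain ⟨B, hAB, hBT, hB⟩ :=
    Set.exists_subsuperset_card_eq (hAS.trans fun v hv => (⟨hv.2, Or.inl hv⟩ : v ∈ sle1 G S W))
      (by omega) hT
  have hBfin : B.Finite := Set.finite_of_ncard_pos (by omega)
  have hBS : (B \ S).encard ≤ 2 := calc
    (B \ S).encard ≤ (B \ A).encard :=
      Set.encard_le_encard (Set.sdiff_subset_sdiff_right (hAS.trans Set.inter_subset_left))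
    _ = ((B \ A).ncard : ℕ∞) := hBfin.sdiff.cast_ncard_eq.symm
    _ ≤ 2 := by rw [Set.ncard_sdiff hAB (hBfin.subset hAB)]; norm_cast; omega
  have hacyc := (hW.mono (hBT.trans fun v hv => hv.1)).isAcyclic_induce hBS
  obtain ⟨I, hI, hBI⟩ := exists_isIndepSet_ncard_le_two_mul_of_isAcyclic_induce hBfin hacyc
  have := hα I hI
  omega

/-- If every independent set of `G` has at most `d` vertices, `W` is an
`S`-forest of `G` with `|S ∩ W| ≥ 2d - 1`, then `|S_{≤1}| ≤ 2d`. -/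
theorem stmt3 {V : Type*} [Fintype V] (G : SimpleGraph V) (d : ℕ)
    (hα : ∀ I : Set V, I.Pairwise (fun u v => ¬ G.Adj u v) → I.ncard ≤ d)
    (S W : Set V) (hW : SForest G S W)
    (h : 2 * d - 1 ≤ (S ∩ W).ncard) :
    (sle1 G S W).ncard ≤ 2 * d :=
  stmt3_general G d hα S W hW h
end

section
/- Let G be a simple graph, S a set of vertices of G, and W an S-forest of G with S ∩ W ≠ ∅. Let S_{≤1} be the set of vertices of W that belong to S ∩ W or have a G-neighbor in S ∩ W, let C_1, …, C_{d'} be the connected components of the induced subgraph G[W ∖ S_{≤1}], and for each i let A_i = N_G(C_i) ∩ S_{≤1}. Then the graph Ĝ obtained from the induced subgraph G[S_{≤1}] by adding d' new vertices w_1, …, w_{d'}, where each w_i is adjacent exactly to the vertices of A_i, contains no cycle passing through a vertex of S. -/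
/-- The graph `Ĝ` obtained from the induced subgraph `G[S_{≤1}]` by adding, for each connected
component `C` of `G[W ∖ S_{≤1}]`, one new vertex adjacent exactly to the vertices of
`N_G(C) ∩ S_{≤1}` (i.e. to the vertices `u ∈ S_{≤1}` having a `G`-neighbor in `C`). -/
def hatGraph {V : Type*} (G : SimpleGraph V) (S W : Set V) :
    SimpleGraph (↥(sle1 G S W) ⊕ (G.induce (W \ sle1 G S W)).ConnectedComponent) :=
  SimpleGraph.fromRel fun a b =>
    match a, b with
    | Sum.inl u, Sum.inl v => G.Adj (u : V) (v : V)
    | Sum.inl u, Sum.inr c => ∃ x : ↥(W \ sle1 G S W),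
        (G.induce (W \ sle1 G S W)).connectedComponentMk x = c ∧ G.Adj (x : V) (u : V)
    | _, _ => False

namespace SimpleGraph

section Contraction

variable {α β : Type*} {H : SimpleGraph α} {K : SimpleGraph β} {f : α → β}

lemma reachable_of_reachable_map (hfib : ∀ z z', f z = f z' → H.Reachable z z')
    (hlift : ∀ a b, K.Adj a b → ∃ z z', f z = a ∧ f z' = b ∧ H.Adj z z')
    {z z' : α} (h : K.Reachable (f z) (f z')) : H.Reachable z z' := by
  obtain ⟨p⟩ := h
  suffices ∀ {a b} (p : K.Walk a b) z z', f z = a → f z' = b → H.Reachable z z' from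
    this p z z' rfl rfl
  intro a b p
  induction p with
  | nil => exact fun z z' hz hz' => hfib z z' (hz.trans hz'.symm)
  | cons hab _ ih =>
    intro z z' hz hz'
    obtain ⟨y, y', rfl, rfl, hy⟩ := hlift _ _ hab
    exact (hfib z y hz).trans (hy.reachable.trans (ih y' z' rfl hz'))

lemma reachable_deleteEdges_of_reachable_deleteEdges_map
    (hfib : ∀ z z', f z = f z' → ∃ p : H.Walk z z', ∀ y ∈ p.support, f y = f z)
    (hlift : ∀ a b, K.Adj a b → ∃ z z', f z = a ∧ f z' = b ∧ H.Adj z z')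
    {z z' : α} (hne : f z ≠ f z')
    (h : (K.deleteEdges {s(f z, f z')}).Reachable (f z) (f z')) :
    (H.deleteEdges {s(z, z')}).Reachable z z' := by
  refine reachable_of_reachable_map (fun y y' hy => ?_) (fun a b hab => ?_) h
  · obtain ⟨p, hp⟩ := hfib y y' hy
    refine reachable_deleteEdges_iff_exists_walk.2 ⟨p, fun he => hne ?_⟩
    rw [hp _ (p.fst_mem_support_of_mem_edges he), hp _ (p.snd_mem_support_of_mem_edges he)]
  · rw [deleteEdges_adj, Set.mem_singleton_iff] at hab
    obtain ⟨y, y', rfl, rfl, hy⟩ := hlift _ _ hab.1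
    refine ⟨y, y', rfl, rfl, deleteEdges_adj.2 ⟨hy, fun he => hab.2 ?_⟩⟩
    simpa using congrArg (Sym2.map f) (Set.mem_singleton_iff.1 he)

theorem exists_isCycle_mem_support_of_isCycle_map
    (hfib : ∀ z z', f z = f z' → ∃ p : H.Walk z z', ∀ y ∈ p.support, f y = f z)
    (hlift : ∀ a b, K.Adj a b → ∃ z z', f z = a ∧ f z' = b ∧ H.Adj z z')
    {x : β} {c : K.Walk x x} (hc : c.IsCycle) {b : β} (hb : b ∈ c.support) :
    ∃ z, f z = b ∧ ∃ (y : α) (p : H.Walk y y), p.IsCycle ∧ z ∈ p.support := by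
  obtain ⟨e, he, hbe⟩ := (Walk.mem_support_iff_exists_mem_edges_of_not_nil hc.not_nil).1 hb
  obtain ⟨b', rfl⟩ := Sym2.mem_iff_exists.1 hbe
  obtain ⟨hadj, hreach⟩ := adj_and_reachable_delete_edges_iff_exists_cycle.2 ⟨x, c, hc, he⟩
  obtain ⟨z, z', rfl, rfl, hzz⟩ := hlift _ _ hadj
  obtain ⟨y, p, hp, hzp⟩ := adj_and_reachable_delete_edges_iff_exists_cycle.1
    ⟨hzz, reachable_deleteEdges_of_reachable_deleteEdges_map hfib hlift hadj.ne hreach⟩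
  exact ⟨z, rfl, y, p, hp, p.fst_mem_support_of_mem_edges hzp⟩

end Contraction

end SimpleGraph

open SimpleGraph

section Hat

variable {V : Type*} {G : SimpleGraph V} {S W : Set V}

variable (G S W) in
open Classical in
noncomputable def hatProj (z : W) :
    ↥(sle1 G S W) ⊕ (G.induce (W \ sle1 G S W)).ConnectedComponent :=
  if h : (z : V) ∈ sle1 G S W then Sum.inl ⟨z, h⟩
  else Sum.inr ((G.induce (W \ sle1 G S W)).connectedComponentMk ⟨z, z.2, h⟩)

lemma hatProj_of_mem {z : W} (hz : (z : V) ∈ sle1 G S W) :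
    hatProj G S W z = Sum.inl ⟨z, hz⟩ := dif_pos hz

lemma hatProj_of_notMem {z : W} (hz : (z : V) ∉ sle1 G S W) :
    hatProj G S W z = Sum.inr ((G.induce (W \ sle1 G S W)).connectedComponentMk ⟨z, z.2, hz⟩) :=
  dif_neg hz

lemma hatProj_sle1 (u : ↥(sle1 G S W)) : hatProj G S W ⟨u, u.2.1⟩ = Sum.inl u :=
  hatProj_of_mem u.2

lemma hatProj_sdiff (x : ↥(W \ sle1 G S W)) :
    hatProj G S W ⟨x, x.2.1⟩ = Sum.inr ((G.induce (W \ sle1 G S W)).connectedComponentMk x) :=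
  hatProj_of_notMem x.2.2

lemma coe_eq_of_hatProj_eq_inl {z : W} {u : ↥(sle1 G S W)} (h : hatProj G S W z = Sum.inl u) :
    (z : V) = u := by
  by_cases hz : (z : V) ∈ sle1 G S W
  · exact congrArg Subtype.val (Sum.inl_injective ((hatProj_of_mem hz).symm.trans h))
  · simp [hatProj_of_notMem hz] at h

lemma exists_walk_of_hatProj_eq (z z' : W) (h : hatProj G S W z = hatProj G S W z') :
    ∃ p : (G.induce W).Walk z z', ∀ y ∈ p.support, hatProj G S W y = hatProj G S W z := by
  by_cases hz : (z : V) ∈ sle1 G S W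
  · obtain rfl : z = z' :=
      Subtype.ext (coe_eq_of_hatProj_eq_inl (h.symm.trans (hatProj_of_mem hz))).symm
    exact ⟨.nil, by simp⟩
  have hz' : (z' : V) ∉ sle1 G S W := fun hz' => by
    simp [hatProj_of_mem hz', hatProj_of_notMem hz] at h
  rw [hatProj_of_notMem hz, hatProj_of_notMem hz', Sum.inr.injEq] at h
  obtain ⟨q⟩ := ConnectedComponent.exact h
  classical
  refine ⟨q.map (G.induceHomOfLE Set.sdiff_subset).toHom, fun y hy => ?_⟩
  obtain ⟨y, hyq, rfl⟩ := List.mem_map.1 (q.support_map _ ▸ hy)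
  rw [hatProj_of_notMem y.2.2, hatProj_of_notMem hz]
  exact congrArg Sum.inr (ConnectedComponent.sound ⟨q.takeUntil y hyq⟩).symm

lemma exists_adj_of_hatGraph_adj {a b} (h : (hatGraph G S W).Adj a b) :
    ∃ z z', hatProj G S W z = a ∧ hatProj G S W z' = b ∧ (G.induce W).Adj z z' := by
  rw [hatGraph, fromRel_adj] at h
  rcases a with u | k <;> rcases b with v | k'
  · exact ⟨_, _, hatProj_sle1 u, hatProj_sle1 v, h.2.elim id fun h => h.symm⟩
  · obtain ⟨x, rfl, hxu⟩ := h.2.resolve_right id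
    exact ⟨_, _, hatProj_sle1 u, hatProj_sdiff x, hxu.symm⟩
  · obtain ⟨x, rfl, hxu⟩ := h.2.resolve_left id
    exact ⟨_, _, hatProj_sdiff x, hatProj_sle1 v, hxu⟩
  · exact (h.2.elim id id).elim

end Hat

theorem stmt4_general {V : Type*} (G : SimpleGraph V) (S W : Set V)
    (hW : SForest G S W) :
    ∀ (a) (c : (hatGraph G S W).Walk a a), c.IsCycle →
      ∀ b ∈ c.support, ∀ u : ↥(sle1 G S W), b = Sum.inl u → (u : V) ∉ S := by
  rintro a c hc b hb u rfl
  obtain ⟨z, hzu, y, p, hp, hzp⟩ :=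
    exists_isCycle_mem_support_of_isCycle_map exists_walk_of_hatProj_eq
      (fun _ _ => exists_adj_of_hatGraph_adj) hc hb
  rw [← coe_eq_of_hatProj_eq_inl hzu]
  exact hW y p hp z hzp

/-- Let `W` be an `S`-forest of `G` with `S ∩ W ≠ ∅`. Then the graph `Ĝ`
obtained from `G[S_{≤1}]` by adding one new vertex per connected component `C_i` of
`G[W ∖ S_{≤1}]`, adjacent exactly to the vertices of `A_i = N_G(C_i) ∩ S_{≤1}`, contains no
cycle passing through a vertex of `S`. -/
theorem stmt4 {V : Type*} (G : SimpleGraph V) (S W : Set V)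
    (hW : SForest G S W) (hne : (S ∩ W).Nonempty) :
    ∀ (a) (c : (hatGraph G S W).Walk a a), c.IsCycle →
      ∀ b ∈ c.support, ∀ u : ↥(sle1 G S W), b = Sum.inl u → (u : V) ∉ S :=
  stmt4_general G S W hW
end

section
/- Let G be a simple graph, S a set of vertices of G, and W an S-forest of G. Let S_{≤1} be the set of vertices of W that belong to S ∩ W or have a G-neighbor in S ∩ W, and let S' = S_{≤1} ∖ S. Then for every edge {u, v} of G with u, v ∈ S', there is no single connected component C of the induced subgraph G[S ∩ W] such that both u and v have a neighbor in C. -/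
/-! If `u ~ x` and `v ~ y` with `x`, `y` in one component of `G[S ∩ W]`, then a path from `x` to
`y` inside `G[S ∩ W]`, closed up by `y ~ v ~ u ~ x`, is a cycle of `G[W]`: it is a cycle because
`u, v ∉ S` lie off the path. It passes through `x ∈ S`, which an `S`-forest forbids. -/

namespace SimpleGraph.Walk

variable {V : Type*} {G : SimpleGraph V}

theorem IsPath.isCycle_cons_cons_concat {u v x y : V} {p : G.Walk x y} (hp : p.IsPath)
    (hu : u ∉ p.support) (hv : v ∉ p.support) (hvu : G.Adj v u) (hux : G.Adj u x)
    (hyv : G.Adj y v) : (cons hvu (cons hux (p.concat hyv))).IsCycle := by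
  have hx : x ≠ v := fun h => hv (h ▸ p.start_mem_support)
  have hy : y ≠ u := fun h => hu (h ▸ p.end_mem_support)
  refine (cons_isCycle_iff _ hvu).mpr ⟨(hp.concat hv hyv).cons ?_, ?_⟩
  · simpa [support_concat] using ⟨hu, hvu.ne.symm⟩
  · simp only [edges_cons, edges_concat, List.concat_eq_append, List.mem_cons, List.mem_append,
      List.not_mem_nil, Sym2.eq_swap (a := v), not_or]
    exact ⟨by simp [hx.symm, hvu.ne], fun h => hu (p.fst_mem_support_of_mem_edges h),
      by simp [hy.symm, hvu.ne.symm]⟩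

end SimpleGraph.Walk

open SimpleGraph

/-- Let `W` be an `S`-forest of `G` and `S' = S_{≤1} ∖ S`. Then for every edge
`{u, v}` of `G` with `u, v ∈ S'`, there is no single connected component `C` of `G[S ∩ W]`
such that both `u` and `v` have a neighbor in `C`. -/
theorem stmt6 {V : Type*} (G : SimpleGraph V) (S W : Set V) (hW : SForest G S W)
    (u v : V) (huv : G.Adj u v)
    (hu : u ∈ sle1 G S W \ S) (hv : v ∈ sle1 G S W \ S) :
    ¬ ∃ c : (G.induce (S ∩ W)).ConnectedComponent,
      (∃ x : ↥(S ∩ W), (G.induce (S ∩ W)).connectedComponentMk x = c ∧ G.Adj u (x : V)) ∧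
      (∃ y : ↥(S ∩ W), (G.induce (S ∩ W)).connectedComponentMk y = c ∧ G.Adj v (y : V)) := by
  classical
  rintro ⟨c, ⟨x, rfl, hux⟩, ⟨y, hyc, hvy⟩⟩
  obtain ⟨p, hp⟩ := (ConnectedComponent.exact hyc).symm.some.toPath
  let f := G.induceHomOfLE (Set.inter_subset_right : S ∩ W ⊆ W)
  let q := p.map f.toHom
  have hq : q.IsPath := hp.map f.injective
  have hqS : ∀ z ∈ q.support, (z : V) ∈ S := by
    simp only [q, Walk.support_map, List.mem_map]
    rintro _ ⟨z, -, rfl⟩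
    exact z.2.1
  have hcyc := hq.isCycle_cons_cons_concat (u := ⟨u, hu.1.1⟩) (v := ⟨v, hv.1.1⟩)
    (fun h => hu.2 (hqS _ h)) (fun h => hv.2 (hqS _ h))
    (by exact huv.symm) (by exact hux) (by exact hvy.symm)
  refine hW _ _ hcyc (f x) ?_ x.2.1
  exact .tail _ (.tail _ (Walk.start_mem_support _))
end

section
/- Let G be a simple graph with independence number at most d, let S be a set of vertices of G, and let X be a subset feedback vertex set of (G, S) of minimum cardinality. Then |S ∖ X| ≤ 2d and |X ∖ S| ≤ 2d. -/
/-- `X` is a subset feedback vertex set of `(G, S)`: no cycle of `G − X` (the subgraph induced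
on the complement of `X`) contains a vertex of `S`. -/
def IsSFVS {V : Type*} (G : SimpleGraph V) (S X : Set V) : Prop :=
  SForest G S Xᶜ

/-!
`S ∖ X` induces a forest, hence a bipartite graph, so one of its two colour classes is an
independent set of `G` with at least half of its vertices: `|S ∖ X| ≤ 2d`. Since `S` itself is a
subset feedback vertex set, minimality gives `|X| ≤ |S|`, i.e. `|X ∖ S| ≤ |S ∖ X|`.
-/

open Finset

namespace SimpleGraph

variable {V W : Type*} {G : SimpleGraph V} {d k : ℕ}

theorem IsIndepSet.map {H : SimpleGraph W} (f : H ↪g G) {s : Set W} (hs : H.IsIndepSet s) :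
    G.IsIndepSet (f '' s) := by
  rintro _ ⟨a, ha, rfl⟩ _ ⟨b, hb, rfl⟩ hne hadj
  exact hs ha hb (ne_of_apply_ne f hne) (f.map_adj_iff.mp hadj)

theorem Colorable.card_le_mul [Finite V] (hG : G.Colorable k)
    (hα : ∀ I, G.IsIndepSet I → I.ncard ≤ d) : Nat.card V ≤ k * d := by
  classical
  have := Fintype.ofFinite V
  obtain ⟨C⟩ := hG
  calc Nat.card V = ∑ i : Fin k, #{v | C v = i} := by
        rw [Nat.card_eq_fintype_card, ← card_univ]
        exact card_eq_sum_card_fiberwise fun _ _ => mem_univ _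
    _ ≤ ∑ _i : Fin k, d := sum_le_sum fun i _ => by
        simpa [Coloring.colorClass, ← Set.ncard_coe_finset] using
          hα _ (C.isIndepSet_colorClass i)
    _ = k * d := by simp

theorem ncard_le_mul_of_colorable_induce [Finite V] {A : Set V}
    (hα : ∀ I, G.IsIndepSet I → I.ncard ≤ d) (hA : (G.induce A).Colorable k) :
    A.ncard ≤ k * d := by
  rw [← Nat.card_coe_set_eq]
  refine hA.card_le_mul fun I hI => ?_
  rw [← Set.ncard_image_of_injective I (Embedding.induce A).injective]
  exact hα _ (hI.map (Embedding.induce A))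

end SimpleGraph

open SimpleGraph

section

variable {V : Type*} {G : SimpleGraph V} {S X : Set V}

theorem IsSFVS.isAcyclic_induce_sdiff (hX : IsSFVS G S X) : (G.induce (S \ X)).IsAcyclic := by
  intro u c hc
  let f := G.induceHomOfLE (show S \ X ≤ Xᶜ from fun _ hv => hv.2)
  exact hX (f u) (c.map f.toHom) (hc.map f.injective) (f u) (Walk.start_mem_support _) u.2.1

theorem isSFVS_self (G : SimpleGraph V) (S : Set V) : IsSFVS G S S :=
  fun _ _ _ v _ => v.2

end

/-- If every independent set of `G` has at most `d` vertices and `X` is a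
subset feedback vertex set of `(G, S)` of minimum cardinality, then `|S ∖ X| ≤ 2d` and
`|X ∖ S| ≤ 2d`. -/
theorem stmt7 {V : Type*} [Fintype V] (G : SimpleGraph V) (d : ℕ)
    (hα : ∀ I : Set V, I.Pairwise (fun u v => ¬ G.Adj u v) → I.ncard ≤ d)
    (S X : Set V) (hX : IsSFVS G S X)
    (hmin : ∀ Y : Set V, IsSFVS G S Y → X.ncard ≤ Y.ncard) :
    (S \ X).ncard ≤ 2 * d ∧ (X \ S).ncard ≤ 2 * d := by
  have hSX : (S \ X).ncard ≤ 2 * d :=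
    ncard_le_mul_of_colorable_induce hα hX.isAcyclic_induce_sdiff.colorable_two
  have hXS : (X \ S).ncard ≤ (S \ X).ncard :=
    (Set.ncard_le_ncard_iff_ncard_sdiff_le_ncard_sdiff).mp (hmin S (isSFVS_self G S))
  exact ⟨hSX, hXS.trans hSX⟩
end
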